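/- arXiv:2508.14180 — 2 statements merged into one kernel-verified Lean document; each statement's English description precedes it below -/
import Mathlib

section
/- Fix a real vector s = (s_1, ..., s_L) with all entries distinct, and let σ be the permutation such that s_{σ(k)} is the k-th largest entry. For the SoftSort matrix Π(τ) with entries Π_{k,ℓ}(τ) = exp(−|s_ℓ − s_{σ(k)}|/τ) / ∑_j exp(−|s_j − s_{σ(k)}|/τ), as τ → 0⁺ we have Π_{k,ℓ}(τ) → 1 if ℓ = σ(k) and Π_{k,ℓ}(τ) → 0 otherwise; i.e., Π(τ) converges entrywise to the hard permutation matrix of the descending sort. -/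
open Filter

theorem softsort_limit_consistency
    (L : ℕ) (s : Fin L → ℝ) (hs : Function.Injective s)
    (σ : Equiv.Perm (Fin L))
    (hσ : ∀ i j : Fin L, i ≤ j → s (σ j) ≤ s (σ i))
    (k ℓ : Fin L) :
    Tendsto
      (fun τ : ℝ =>
        Real.exp (-(|s ℓ - s (σ k)|) / τ) /
          ∑ j, Real.exp (-(|s j - s (σ k)|) / τ))
      (nhdsWithin 0 (Set.Ioi 0))
      (nhds (if ℓ = σ k then (1 : ℝ) else 0)) := by
  have key : ∀ j : Fin L, Tendsto (fun τ : ℝ => Real.exp (-(|s j - s (σ k)|) / τ))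
      (nhdsWithin 0 (Set.Ioi 0)) (nhds (if j = σ k then (1 : ℝ) else 0)) := by
    intro j
    by_cases hj : j = σ k
    · simp [hj]
    · simp only [if_neg hj]
      have hd : 0 < |s j - s (σ k)| := by
        rw [abs_pos, sub_ne_zero]
        exact fun h => hj (hs h)
      have h1 : Tendsto (fun τ : ℝ => τ⁻¹) (nhdsWithin 0 (Set.Ioi 0)) atTop :=
        tendsto_inv_nhdsGT_zero
      have h2 : Tendsto (fun τ : ℝ => -(|s j - s (σ k)|) / τ)
          (nhdsWithin 0 (Set.Ioi 0)) atBot := by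
        simp only [div_eq_mul_inv]
        exact Tendsto.const_mul_atTop_of_neg (neg_neg_iff_pos.mpr hd) h1
      exact Real.tendsto_exp_atBot.comp h2
  have hsum : Tendsto (fun τ : ℝ => ∑ j, Real.exp (-(|s j - s (σ k)|) / τ))
      (nhdsWithin 0 (Set.Ioi 0)) (nhds (∑ j, if j = σ k then (1 : ℝ) else 0)) :=
    tendsto_finset_sum _ fun j _ => key j
  have hone : (∑ j, if j = σ k then (1 : ℝ) else 0) = 1 := by
    simp
  rw [hone] at hsum
  have := (key ℓ).div hsum one_ne_zero
  rw [div_one] at this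
  exact this
end

section
/- Let e_1 ≥ e_2 ≥ ... ≥ e_n ≥ 0 and r_1, ..., r_n ∈ [0,1] with e_i ∈ [0,1]. Among all permutations π of {1,...,n}, the at-least-one-click utility U(π) = 1 − ∏_{i=1}^n (1 − e_i · r_{π(i)}) is maximized by the permutation π* that sorts r in descending order (r_{π*(1)} ≥ ... ≥ r_{π*(n)}). -/
open Finset Equiv

/-- Inversion count of a permutation of `Fin n`. -/
def invCount {n : ℕ} (σ : Equiv.Perm (Fin n)) : ℕ :=
  (Finset.univ.filter fun p : Fin n × Fin n => p.1 < p.2 ∧ σ p.2 < σ p.1).card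

lemma perm_eq_refl_of_strictMono {n : ℕ} (σ : Equiv.Perm (Fin n))
    (h : StrictMono σ) : ∀ i, σ i = i := by
  haveI : WellFoundedLT (Fin n) := Finite.to_wellFoundedLT
  have hinv : StrictMono (σ.symm : Fin n → Fin n) := by
    intro a b hab
    by_contra hc
    push_neg at hc
    have h2 := h.monotone hc
    simp only [Equiv.apply_symm_apply] at h2
    exact absurd hab (not_lt.mpr h2)
  intro i
  exact le_antisymm (by simpa using hinv.le_apply (x := σ i)) h.le_apply

lemma invCount_swap_lt {n : ℕ} (σ : Equiv.Perm (Fin (n+1))) (i : Fin n)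
    (hi : σ i.succ < σ i.castSucc) :
    invCount (σ * Equiv.swap i.castSucc i.succ) < invCount σ := by
  classical
  set c := i.castSucc
  set s := i.succ
  have hcs : c < s := (Fin.castSucc_lt_succ : i.castSucc < i.succ)
  have hval : ∀ a : Fin (n+1), ((Equiv.swap c s) a : ℕ) =
      if (a : ℕ) = (i : ℕ) then (i : ℕ) + 1 else if (a : ℕ) = (i : ℕ) + 1 then (i : ℕ) else a := by
    intro a
    rcases eq_or_ne a c with rfl | hac
    · simp [Equiv.swap_apply_left, c, s]
    · rcases eq_or_ne a s with rfl | has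
      · have : ¬ ((s : ℕ) = (i : ℕ)) := by simp [s]
        simp [Equiv.swap_apply_right, c, s, this]
      · have h1 : (a : ℕ) ≠ (i : ℕ) := fun h => hac (Fin.ext h)
        have h2 : (a : ℕ) ≠ (i : ℕ) + 1 := fun h => has (Fin.ext h)
        simp [Equiv.swap_apply_of_ne_of_ne hac has, h1, h2]
  have hTmono : ∀ a b : Fin (n+1), a < b → ¬(a = c ∧ b = s) →
      Equiv.swap c s a < Equiv.swap c s b := by
    intro a b hab hne
    have hab' : (a : ℕ) < (b : ℕ) := hab
    have hne' : ¬((a : ℕ) = (i : ℕ) ∧ (b : ℕ) = (i : ℕ) + 1) := by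
      rintro ⟨h1, h2⟩
      exact hne ⟨Fin.ext h1, Fin.ext h2⟩
    have hbn : (b : ℕ) < n + 1 := b.isLt
    have hin : (i : ℕ) < n := i.isLt
    rw [Fin.lt_def, hval a, hval b]
    split_ifs <;> omega
  -- the map (a,b) ↦ (swap a, swap b) injects inversions of σ*swap into inversions of σ minus (c,s)
  have hsubset : ∀ p : Fin (n+1) × Fin (n+1),
      p ∈ (Finset.univ.filter fun p : Fin (n+1) × Fin (n+1) =>
        p.1 < p.2 ∧ (σ * Equiv.swap c s) p.2 < (σ * Equiv.swap c s) p.1) →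
      (Equiv.swap c s p.1, Equiv.swap c s p.2) ∈
        ((Finset.univ.filter fun p : Fin (n+1) × Fin (n+1) =>
          p.1 < p.2 ∧ σ p.2 < σ p.1) \ {(c, s)}) := by
    rintro ⟨a, b⟩ (hp : (a, b) ∈ Finset.univ.filter fun p : Fin (n+1) × Fin (n+1) =>
      p.1 < p.2 ∧ (σ * Equiv.swap c s) p.2 < (σ * Equiv.swap c s) p.1)
    replace hp := (Finset.mem_filter.mp hp).2
    simp only [Finset.mem_filter, Finset.mem_univ, true_and, Equiv.Perm.mul_apply] at hp
    obtain ⟨hab, hinv⟩ := hp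
    have hne : ¬(a = c ∧ b = s) := by
      rintro ⟨rfl, rfl⟩
      rw [Equiv.swap_apply_left, Equiv.swap_apply_right] at hinv
      exact absurd (hinv.trans hi) (lt_irrefl _)
    have hlt := hTmono a b hab hne
    simp only [Finset.mem_sdiff, Finset.mem_filter, Finset.mem_univ, true_and,
      Finset.mem_singleton, Prod.mk.injEq]
    refine ⟨⟨hlt, hinv⟩, ?_⟩
    rintro ⟨h1, h2⟩
    -- swap a = c and swap b = s means a = s, b = c, contradicting a < b
    have ha : a = s := by
      have := congrArg (Equiv.swap c s) h1
      rwa [Equiv.swap_apply_self, Equiv.swap_apply_left] at this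
    have hb : b = c := by
      have := congrArg (Equiv.swap c s) h2
      rwa [Equiv.swap_apply_self, Equiv.swap_apply_right] at this
    rw [ha, hb] at hab
    exact absurd (hcs.trans hab) (lt_irrefl _)
  have hcard : invCount (σ * Equiv.swap c s) ≤
      (((Finset.univ.filter fun p : Fin (n+1) × Fin (n+1) =>
          p.1 < p.2 ∧ σ p.2 < σ p.1)) \ {(c, s)}).card := by
    apply Finset.card_le_card_of_injOn
      (fun p => (Equiv.swap c s p.1, Equiv.swap c s p.2)) (fun p hp => hsubset p hp)
    intro p _ q _ h
    simp only [Prod.mk.injEq] at h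
    exact Prod.ext (by simpa using congrArg (Equiv.swap c s) h.1)
      (by simpa using congrArg (Equiv.swap c s) h.2)
  have hmem : (c, s) ∈ (Finset.univ.filter fun p : Fin (n+1) × Fin (n+1) =>
      p.1 < p.2 ∧ σ p.2 < σ p.1) := by
    simp [hcs, hi]
  calc invCount (σ * Equiv.swap c s) ≤ _ := hcard
    _ < invCount σ := by
        rw [Finset.sdiff_singleton_eq_erase]
        exact Finset.card_erase_lt_of_mem hmem

lemma key_lemma {n : ℕ} (E U : Fin n → ℝ)
    (hE01 : ∀ i, E i ∈ Set.Icc (0:ℝ) 1) (hU01 : ∀ i, U i ∈ Set.Icc (0:ℝ) 1)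
    (hEa : ∀ i j : Fin n, i ≤ j → E j ≤ E i)
    (hUa : ∀ i j : Fin n, i ≤ j → U j ≤ U i) :
    ∀ σ : Equiv.Perm (Fin n),
      ∏ i, (1 - E i * U i) ≤ ∏ i, (1 - E i * U (σ i)) := by
  classical
  have hfac : ∀ (i j : Fin n), 0 ≤ 1 - E i * U j := by
    intro i j
    have h1 := hE01 i; have h2 := hU01 j
    nlinarith [h1.1, h1.2, h2.1, h2.2]
  suffices H : ∀ (N : ℕ) (σ : Equiv.Perm (Fin n)), invCount σ = N →
      ∏ i, (1 - E i * U i) ≤ ∏ i, (1 - E i * U (σ i)) by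
    intro σ; exact H _ σ rfl
  intro N
  induction N using Nat.strong_induction_on with
  | _ N ih =>
  intro σ hN
  rcases Nat.eq_zero_or_pos N with rfl | hpos
  · -- no inversions: σ is strictly monotone hence the identity
    have hmono : StrictMono σ := by
      intro a b hab
      rcases lt_trichotomy (σ a) (σ b) with h | h | h
      · exact h
      · exact absurd (σ.injective h) hab.ne
      · exfalso
        have : (a, b) ∈ (Finset.univ.filter fun p : Fin n × Fin n =>
            p.1 < p.2 ∧ σ p.2 < σ p.1) := by simp [hab, h]
        have := Finset.card_pos.mpr ⟨_, this⟩
        rw [← invCount, hN] at this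
        exact absurd this (lt_irrefl _)
    have hid : ∀ i, σ i = i := perm_eq_refl_of_strictMono σ hmono
    simp [hid]
  · -- find an adjacent inversion
    obtain _ | n := n
    · simp
    · have hex : ∃ i : Fin n, σ i.succ < σ i.castSucc := by
        by_contra hno
        push_neg at hno
        have hmono : StrictMono σ := Fin.strictMono_iff_lt_succ.mpr (by
          intro i
          rcases lt_or_eq_of_le (hno i) with h | h
          · exact h
          · exact absurd (σ.injective h) (Fin.castSucc_lt_succ : i.castSucc < i.succ).ne)
        have : invCount σ = 0 := by
          rw [invCount, Finset.card_eq_zero, Finset.filter_eq_empty_iff]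
          rintro ⟨a, b⟩ _
          rintro ⟨hab, hinv⟩
          exact absurd (hmono hab) (not_lt.mpr hinv.le)
        omega
      obtain ⟨i, hi⟩ := hex
      set c := i.castSucc
      set s := i.succ
      set σ' := σ * Equiv.swap c s with hσ'
      have hlt := invCount_swap_lt σ i hi
      rw [hN] at hlt
      have hstep := ih _ hlt σ' rfl
      refine hstep.trans ?_
      -- compare products of σ' and σ: they differ only at c and s
      have hcs : c ≠ s := (Fin.castSucc_lt_succ : i.castSucc < i.succ).ne
      have hsplit : ∀ τ : Equiv.Perm (Fin (n+1)),
          ∏ j, (1 - E j * U (τ j)) =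
          (1 - E c * U (τ c)) * ((1 - E s * U (τ s)) *
            ∏ j ∈ (Finset.univ \ {c, s}), (1 - E j * U (τ j))) := by
        intro τ
        rw [← Finset.prod_sdiff (Finset.subset_univ {c, s})]
        rw [Finset.prod_pair hcs]
        ring
      rw [hsplit σ, hsplit σ']
      have hrest : ∀ j ∈ Finset.univ \ ({c, s} : Finset (Fin (n+1))),
          (1 - E j * U (σ' j)) = (1 - E j * U (σ j)) := by
        intro j hj
        simp only [Finset.mem_sdiff, Finset.mem_insert, Finset.mem_singleton] at hj
        push_neg at hj
        rw [hσ']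
        simp [Equiv.swap_apply_of_ne_of_ne hj.2.1 hj.2.2]
      rw [Finset.prod_congr rfl hrest]
      have hc' : σ' c = σ s := by simp [hσ', Equiv.swap_apply_left]
      have hs' : σ' s = σ c := by simp [hσ', Equiv.swap_apply_right]
      rw [hc', hs']
      -- exchange inequality
      have hrestnn : 0 ≤ ∏ j ∈ (Finset.univ \ ({c, s} : Finset (Fin (n+1)))),
          (1 - E j * U (σ j)) := Finset.prod_nonneg fun j _ => hfac j (σ j)
      have hEcs : E s ≤ E c := hEa c s (Fin.castSucc_lt_succ : i.castSucc < i.succ).le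
      have hUcs : U (σ c) ≤ U (σ s) := hUa (σ s) (σ c) hi.le
      have hkey : (1 - E c * U (σ s)) * (1 - E s * U (σ c)) ≤
          (1 - E c * U (σ c)) * (1 - E s * U (σ s)) := by
        nlinarith [hEcs, hUcs]
      nlinarith [mul_le_mul_of_nonneg_right hkey hrestnn]

theorem ideal_ranking_maximizes_click_utility
    (n : ℕ) (e r : Fin n → ℝ)
    (he01 : ∀ i, e i ∈ Set.Icc (0 : ℝ) 1)
    (he : ∀ i j : Fin n, i ≤ j → e j ≤ e i)
    (hr : ∀ i, r i ∈ Set.Icc (0 : ℝ) 1)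
    (πstar : Equiv.Perm (Fin n))
    (hsort : ∀ i j : Fin n, i ≤ j → r (πstar j) ≤ r (πstar i)) :
    ∀ π : Equiv.Perm (Fin n),
      1 - ∏ i, (1 - e i * r (π i)) ≤ 1 - ∏ i, (1 - e i * r (πstar i)) := by
  intro π
  have key := key_lemma e (fun i => r (πstar i)) he01 (fun i => hr _) he hsort
    (πstar⁻¹ * π)
  simp only [Equiv.Perm.mul_apply, Equiv.Perm.inv_def, Equiv.apply_symm_apply] at key
  linarith
end
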